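/- Let Δx > 0 and let u : ℝ → ℝ be a polynomial function of degree at most 3. For y ∈ ℝ define the P² orthonormal-basis coefficients on the cell [y − Δx/2, y + Δx/2]: a₀(y) = (1/Δx)∫ u dx, a₁(y) = (1/Δx)∫ u(x)·2√3·ξ(x) dx, a₂(y) = (1/Δx)∫ u(x)·(6√5·ξ(x)² − √5/2) dx, where ξ(x) = (x−y)/Δx, and set F(y) = a₀(y) + √3·a₁(y) + √5·a₂(y) (the right-boundary upwind value). Then for every y ∈ ℝ: (√3/Δx)·(F(y) + F(y − Δx) − 2a₀(y)) = (√3/6)·u''(y)·Δx − (√3/60)·u'''(y)·Δx². -/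

import Mathlib

/-!
Shifting a cell to `[-Δx/2, Δx/2]` and expanding the cubic `u` about its centre `z`,
`u (z + t) = A + B t + C t² + D t³`, the three coefficients only see the even moments
`∫ 1, ∫ t², ∫ t⁴` of the symmetric cell. The P² projection reproduces `A + B t + C t²` and
replaces `t³` by its projection `(3/20) Δx² t`, so the right boundary value is
`F z = u (z + Δx/2) - u''' Δx³ / 120`. As `u'''` is constant, the operator becomes
`u (y + Δx/2) + u (y - Δx/2) - 2 a₀ y - u''' Δx³ / 60`, and by the midpoint rule
`a₀ y = u y + u'' y Δx² / 24` the first three terms add up to `u'' y Δx² / 6`.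
-/

open Real Polynomial intervalIntegral

namespace Polynomial

theorem iteratedDeriv_eval {𝕜 : Type*} [NontriviallyNormedField 𝕜] (p : 𝕜[X]) (n : ℕ) :
    iteratedDeriv n (fun x => p.eval x) = fun x => (derivative^[n] p).eval x := by
  induction n generalizing p with
  | zero => simp
  | succ n ih =>
    have hderiv : _root_.deriv (fun x => p.eval x) = fun x => (derivative p).eval x :=
      _root_.funext fun _ => p.deriv
    rw [iteratedDeriv_succ', hderiv, ih, Function.iterate_succ_apply]

theorem eval_hasseDeriv {K : Type*} [Field K] [CharZero K] (p : K[X]) (k : ℕ) (z : K) :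
    (hasseDeriv k p).eval z = (derivative^[k] p).eval z / k.factorial := by
  rw [← congrFun (factorial_smul_hasseDeriv k) p,
    eq_div_iff (Nat.cast_ne_zero.mpr k.factorial_ne_zero)]
  simp [mul_comm]

theorem eval_add_of_natDegree_le_three {K : Type*} [Field K] [CharZero K] {p : K[X]}
    (hp : p.natDegree ≤ 3) (z t : K) :
    p.eval (z + t) = p.eval z + (derivative p).eval z * t
      + (derivative^[2] p).eval z / 2 * t ^ 2 + (derivative^[3] p).eval z / 6 * t ^ 3 := by
  rw [add_comm, ← taylor_eval, eval_eq_sum_range' (n := 4) (by rw [natDegree_taylor]; omega)]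
  simp [Finset.sum_range_succ, taylor_coeff, eval_hasseDeriv, Nat.factorial]

theorem eval_iterate_derivative_three_eq {K : Type*} [Semiring K] {p : K[X]}
    (hp : p.natDegree ≤ 3) (z w : K) :
    (derivative^[3] p).eval z = (derivative^[3] p).eval w := by
  have hdeg : (derivative^[3] p).natDegree ≤ 0 :=
    (natDegree_iterate_derivative p 3).trans (by omega)
  rw [eq_C_of_natDegree_le_zero hdeg, eval_C, eval_C]

end Polynomial

theorem integral_quintic_symmetric (h c₀ c₁ c₂ c₃ c₄ c₅ : ℝ) :
    ∫ t in -h..h, (c₀ + c₁ * t + c₂ * t ^ 2 + c₃ * t ^ 3 + c₄ * t ^ 4 + c₅ * t ^ 5)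
      = 2 * c₀ * h + 2 / 3 * c₂ * h ^ 3 + 2 / 5 * c₄ * h ^ 5 := by
  simp (disch := apply Continuous.intervalIntegrable; fun_prop) only [integral_add,
    integral_const_mul, integral_const_mul c₁ fun t => t, integral_pow, integral_id,
    integral_const, smul_eq_mul]
  ring

theorem integral_sub_add_eq_integral_comp_add {E : Type*} [NormedAddCommGroup E]
    [NormedSpace ℝ E] (f : ℝ → E) (z h : ℝ) :
    ∫ x in (z - h)..(z + h), f x = ∫ t in -h..h, f (z + t) := by
  rw [integral_comp_add_left, ← sub_eq_add_neg]

noncomputable section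

def p2Coeff₀ (Δx : ℝ) (u : ℝ → ℝ) (y : ℝ) : ℝ :=
  (1 / Δx) * ∫ x in (y - Δx / 2)..(y + Δx / 2), u x

def p2Coeff₁ (Δx : ℝ) (u : ℝ → ℝ) (y : ℝ) : ℝ :=
  (1 / Δx) * ∫ x in (y - Δx / 2)..(y + Δx / 2), u x * (2 * √3 * ((x - y) / Δx))

def p2Coeff₂ (Δx : ℝ) (u : ℝ → ℝ) (y : ℝ) : ℝ :=
  (1 / Δx) * ∫ x in (y - Δx / 2)..(y + Δx / 2),
    u x * (6 * √5 * ((x - y) / Δx) ^ 2 - √5 / 2)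

def p2RightValue (Δx : ℝ) (u : ℝ → ℝ) (y : ℝ) : ℝ :=
  p2Coeff₀ Δx u y + √3 * p2Coeff₁ Δx u y + √5 * p2Coeff₂ Δx u y

end

section CubicOnCell

variable {Δx : ℝ} {u : ℝ → ℝ} {z A B C D : ℝ}

theorem p2Coeff₀_of_cubic (hΔx : Δx ≠ 0)
    (hu : ∀ t, u (z + t) = A + B * t + C * t ^ 2 + D * t ^ 3) :
    p2Coeff₀ Δx u z = A + C * Δx ^ 2 / 12 := by
  rw [p2Coeff₀, integral_sub_add_eq_integral_comp_add,
    integral_congr (g := fun t => A + B * t + C * t ^ 2 + D * t ^ 3 + 0 * t ^ 4 + 0 * t ^ 5)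
      fun t _ => by simp [hu],
    integral_quintic_symmetric]
  field_simp
  ring

theorem sqrt_three_mul_p2Coeff₁_of_cubic (hΔx : Δx ≠ 0)
    (hu : ∀ t, u (z + t) = A + B * t + C * t ^ 2 + D * t ^ 3) :
    √3 * p2Coeff₁ Δx u z = B * Δx / 2 + 3 * D * Δx ^ 3 / 40 := by
  have hk : ∀ t, u (z + t) * (2 * √3 * ((z + t - z) / Δx))
      = 2 * √3 / Δx * (0 + A * t + B * t ^ 2 + C * t ^ 3 + D * t ^ 4 + 0 * t ^ 5) := by
    intro t
    rw [hu, add_sub_cancel_left]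
    ring
  have h3 : √3 ^ 2 = 3 := sq_sqrt (by norm_num)
  rw [p2Coeff₁, integral_sub_add_eq_integral_comp_add, integral_congr fun t _ => hk t,
    integral_const_mul, integral_quintic_symmetric]
  field_simp
  linear_combination (800 * Δx ^ 2 * B + 120 * Δx ^ 4 * D) * h3

theorem sqrt_five_mul_p2Coeff₂_of_cubic (hΔx : Δx ≠ 0)
    (hu : ∀ t, u (z + t) = A + B * t + C * t ^ 2 + D * t ^ 3) :
    √5 * p2Coeff₂ Δx u z = C * Δx ^ 2 / 6 := by
  have hk : ∀ t, u (z + t) * (6 * √5 * ((z + t - z) / Δx) ^ 2 - √5 / 2)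
      = √5 * (-(A / 2) + -(B / 2) * t + (6 * A / Δx ^ 2 - C / 2) * t ^ 2
        + (6 * B / Δx ^ 2 - D / 2) * t ^ 3 + 6 * C / Δx ^ 2 * t ^ 4
        + 6 * D / Δx ^ 2 * t ^ 5) := by
    intro t
    rw [hu, add_sub_cancel_left]
    field_simp
    ring
  have h5 : √5 ^ 2 = 5 := sq_sqrt (by norm_num)
  rw [p2Coeff₂, integral_sub_add_eq_integral_comp_add, integral_congr fun t _ => hk t,
    integral_const_mul, integral_quintic_symmetric]
  field_simp
  linear_combination 48 * Δx ^ 2 * C * h5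

theorem p2RightValue_of_cubic (hΔx : Δx ≠ 0)
    (hu : ∀ t, u (z + t) = A + B * t + C * t ^ 2 + D * t ^ 3) :
    p2RightValue Δx u z = u (z + Δx / 2) - D * Δx ^ 3 / 20 := by
  rw [p2RightValue, p2Coeff₀_of_cubic hΔx hu, sqrt_three_mul_p2Coeff₁_of_cubic hΔx hu,
    sqrt_five_mul_p2Coeff₂_of_cubic hΔx hu, hu]
  ring

end CubicOnCell

/-- The upwind spatial operator in the `a₁` equation of the third-order DG scheme
equals `(√3/6)·u''(y)·Δx − (√3/60)·u'''(y)·Δx²` for cubic `u`. -/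
theorem dg_p2_a1_operator_upwind_flux (Δx : ℝ) (hΔx : 0 < Δx)
    (u : ℝ → ℝ) (p : Polynomial ℝ) (hp : p.natDegree ≤ 3)
    (hu : ∀ x, u x = p.eval x)
    (a₀ a₁ a₂ F : ℝ → ℝ)
    (ha₀ : ∀ y, a₀ y = (1 / Δx) * ∫ x in (y - Δx / 2)..(y + Δx / 2), u x)
    (ha₁ : ∀ y, a₁ y = (1 / Δx) * ∫ x in (y - Δx / 2)..(y + Δx / 2),
      u x * (2 * Real.sqrt 3 * ((x - y) / Δx)))
    (ha₂ : ∀ y, a₂ y = (1 / Δx) * ∫ x in (y - Δx / 2)..(y + Δx / 2),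
      u x * (6 * Real.sqrt 5 * ((x - y) / Δx) ^ 2 - Real.sqrt 5 / 2))
    (hF : ∀ y, F y = a₀ y + Real.sqrt 3 * a₁ y + Real.sqrt 5 * a₂ y) :
    ∀ y : ℝ, (Real.sqrt 3 / Δx) * (F y + F (y - Δx) - 2 * a₀ y)
      = (Real.sqrt 3 / 6) * iteratedDeriv 2 u y * Δx
        - (Real.sqrt 3 / 60) * iteratedDeriv 3 u y * Δx ^ 2 := by
  obtain rfl : u = fun x => p.eval x := funext hu
  obtain rfl : a₀ = p2Coeff₀ Δx fun x => p.eval x := funext ha₀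
  obtain rfl : a₁ = p2Coeff₁ Δx fun x => p.eval x := funext ha₁
  obtain rfl : a₂ = p2Coeff₂ Δx fun x => p.eval x := funext ha₂
  obtain rfl : F = p2RightValue Δx fun x => p.eval x := funext hF
  intro y
  have taylor := eval_add_of_natDegree_le_three hp
  rw [p2RightValue_of_cubic hΔx.ne' (taylor y), p2RightValue_of_cubic hΔx.ne' (taylor (y - Δx)),
    p2Coeff₀_of_cubic hΔx.ne' (taylor y), eval_iterate_derivative_three_eq hp (y - Δx) y,
    iteratedDeriv_eval, iteratedDeriv_eval, show y - Δx + Δx / 2 = y + -(Δx / 2) by ring,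
    taylor y, taylor y]
  field_simp
  ring
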